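/- arXiv:2308.02684 — 2 statements merged into one kernel-verified Lean document; each statement's English description precedes it below -/
import Mathlib

section
/- (Baby Hummer tracking) Consider the 4-card configuration c₁ given by c₁ 0 = (0, true) and c₁ p = (p, false) for p ≠ 0 (the array (1̄, 2, 3, 4)). For every configuration c reachable from c₁ by finitely many applications of the cut α and the flip β: c has exactly one maloriented card, and if q is the unique position whose orientation differs from the other three and r is the unique position with (c r).1 = 2 (the card originally third from the top), then q ≡ r + 2 (mod 4). -/
/-- A configuration of an `n`-card deck: position `p` holds the card that originally
occupied position `(c p).1`, and it is face-up iff `(c p).2 = true`. -/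
abbrev Deck (n : ℕ) : Type := Fin n → Fin n × Bool

/-- The all-face-down initial configuration `c₀`. -/
def initial {n : ℕ} : Deck n := fun p => (p, false)

/-- The cut `α`: sends `c` to `p ↦ c ((p + 1) % n)`. -/
def cut {n : ℕ} (c : Deck n) : Deck n :=
  fun p => c ⟨(p.val + 1) % n, Nat.mod_lt _ (Nat.lt_of_le_of_lt (Nat.zero_le _) p.isLt)⟩

/-- The inverse cut `α⁻¹`: sends `c` to `p ↦ c ((p + n - 1) % n)`. -/
def invCut {n : ℕ} (c : Deck n) : Deck n :=
  fun p => c ⟨(p.val + n - 1) % n, Nat.mod_lt _ (Nat.lt_of_le_of_lt (Nat.zero_le _) p.isLt)⟩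

/-- The flip `δ_k` (and also `τ_m` for odd `m`): turn over the top `k` cards as a single card.
For `0 < k ≤ n` it agrees with `c` at positions `p ≥ k`, and at `p < k` its value is
`(q, !b)` where `(q, b) = c (k - 1 - p)`. -/
def flipTop {n : ℕ} (k : ℕ) (c : Deck n) : Deck n := fun p =>
  if h : p.val < k ∧ k ≤ n then
    ((c ⟨k - 1 - p.val, by omega⟩).1, !(c ⟨k - 1 - p.val, by omega⟩).2)
  else c p

/-- The deal `γ_j`: its value at `p < n - j` is `c (p + j)`, and at `p ≥ n - j` is
`c (n - 1 - p)`. -/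
def deal {n : ℕ} (j : ℕ) (c : Deck n) : Deck n := fun p =>
  if h : p.val < n - j then c ⟨p.val + j, by omega⟩
  else c ⟨n - 1 - p.val, by have := p.isLt; omega⟩

/-- The move `ω_l`: its value at `p < n - l - 1` is `c (p + l + 1)`, at `p = n - l - 1`
is `c l`, and at `p ≥ n - l` is `c (p - (n - l))`. -/
def omegaMove {n : ℕ} (l : ℕ) (c : Deck n) : Deck n := fun p =>
  if hl : l < n then
    if _h1 : p.val < n - l - 1 then c ⟨p.val + l + 1, by omega⟩
    else if _h2 : p.val = n - l - 1 then c ⟨l, hl⟩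
    else c ⟨p.val - (n - l), by have := p.isLt; omega⟩
  else c p

/-- `Reachable X c c'` : `c'` is obtained from `c` by finitely many successive
applications of maps in `X`. -/
def Reachable {n : ℕ} (X : Set (Deck n → Deck n)) (c c' : Deck n) : Prop :=
  Relation.ReflTransGen (fun a b => ∃ f ∈ X, b = f a) c c'

/-- The Baby Hummer starting configuration `(1̄, 2, 3, 4)`: all cards in their original
positions, only the top card face up. -/
def babyHummerStart : Deck 4 := fun p => (p, decide (p = 0))

/-!
The invariant is: exactly one card is maloriented, and it lies two positions (mod 4) after the
card originally third from the top. The cut `α` rotates both positions by one. If the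
maloriented card is among the top two, `β` flips a face-up and a face-down card and swaps
them, so the orientation pattern and the rest of the deck are unchanged. Otherwise the
tracked card is among the top two; after `β` the top two cards share the orientation of the
maloriented one, so the maloriented position moves to the other one of positions `2, 3`,
while the tracked card moves to the other one of positions `0, 1`.
-/

variable {n : ℕ}

def IsMaloriented (c : Deck n) (q : Fin n) : Prop :=
  ∀ p, p ≠ q → (c p).2 ≠ (c q).2

lemma IsMaloriented.eq_not {c : Deck n} {q : Fin n} (hq : IsMaloriented c q) {p : Fin n}
    (hp : p ≠ q) : (c p).2 = !(c q).2 :=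
  Bool.eq_not.mpr (hq p hp)

lemma IsMaloriented.eq (hn : 3 ≤ n) {c : Deck n} {q q' : Fin n}
    (hq : IsMaloriented c q) (hq' : IsMaloriented c q') : q = q' := by
  by_contra hne
  obtain ⟨p, -, hp⟩ : ∃ p ∈ Finset.univ, p ∉ ({q, q'} : Finset (Fin n)) := by
    refine Finset.exists_mem_notMem_of_card_lt_card ?_
    rw [Finset.card_univ, Fintype.card_fin]
    exact (Finset.card_le_two).trans_lt (by omega)
  rw [Finset.mem_insert, Finset.mem_singleton, not_or] at hp
  exact hq' q hne (Bool.not_inj ((hq.eq_not hp.1).symm.trans (hq'.eq_not hp.2)))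

lemma IsMaloriented.card_faceUp {c : Deck n} {q : Fin n} (hq : IsMaloriented c q) :
    (Finset.univ.filter fun p => (c p).2 = true).card = 1 ∨
      (Finset.univ.filter fun p => (c p).2 = true).card = n - 1 := by
  cases hcq : (c q).2
  · right
    have : (Finset.univ.filter fun p => (c p).2 = true) = {q}ᶜ := by
      ext p
      by_cases hp : p = q
      · simp [hp, hcq]
      · simp [hp, hq.eq_not hp, hcq]
    rw [this, Finset.card_compl, Finset.card_singleton, Fintype.card_fin]
  · left
    rw [Finset.card_eq_one]
    refine ⟨q, Finset.ext fun p => ?_⟩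
    by_cases hp : p = q
    · simp [hp, hcq]
    · simp [hp, hq.eq_not hp, hcq]

lemma Reachable.invariant {X : Set (Deck n → Deck n)} {P : Deck n → Prop}
    (hX : ∀ f ∈ X, ∀ c, P c → P (f c)) {c c' : Deck n} (h : Reachable X c c') (hc : P c) :
    P c' := by
  induction h with
  | refl => exact hc
  | tail _ hstep ih =>
    obtain ⟨f, hf, rfl⟩ := hstep
    exact hX f hf _ ih

lemma cut_apply [NeZero n] (c : Deck n) (p : Fin n) : cut c p = c (p + 1) := by
  simp only [cut]
  congr 1
  ext
  simp [Fin.val_add]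

@[simp] lemma flipTop_two_apply_zero (c : Deck 4) : flipTop 2 c 0 = ((c 1).1, !(c 1).2) := rfl
@[simp] lemma flipTop_two_apply_one (c : Deck 4) : flipTop 2 c 1 = ((c 0).1, !(c 0).2) := rfl
@[simp] lemma flipTop_two_apply_two (c : Deck 4) : flipTop 2 c 2 = c 2 := rfl
@[simp] lemma flipTop_two_apply_three (c : Deck 4) : flipTop 2 c 3 = c 3 := rfl

def HummerInvariant (c : Deck 4) : Prop :=
  ∃ q, IsMaloriented c q ∧ ∀ r, (c r).1 = 2 → q = r + 2

lemma hummerInvariant_babyHummerStart : HummerInvariant babyHummerStart :=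
  ⟨0, by unfold IsMaloriented; decide, by decide⟩

lemma HummerInvariant.cut {c : Deck 4} (h : HummerInvariant c) : HummerInvariant (cut c) := by
  obtain ⟨q, hq, hr⟩ := h
  refine ⟨q - 1, fun p hp => ?_, fun r hr' => ?_⟩
  · rw [cut_apply, cut_apply, sub_add_cancel]
    exact hq _ fun h => hp (eq_sub_of_add_eq h)
  · rw [cut_apply] at hr'
    rw [hr _ hr', add_right_comm, add_sub_cancel_right]

lemma HummerInvariant.flipTop_two {c : Deck 4} (h : HummerInvariant c) :
    HummerInvariant (flipTop 2 c) := by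
  obtain ⟨q, hq, hr⟩ := h
  -- in `Fin 4`, `q ↦ 1 - q` exchanges `2` and `3`
  refine ⟨if q.val < 2 then q else 1 - q, fun p hp => ?_, fun r hr' => ?_⟩
  · have hb (p : Fin 4) (hp : p ≠ q) := hq.eq_not hp
    fin_cases q <;> fin_cases p <;> simp_all
  -- `flipTop 2 c r` unfolds definitionally to an entry of `c`, so `hr` applies to `hr'` directly.
  · fin_cases r <;> obtain rfl := hr _ hr' <;> decide

/-- **Baby Hummer tracking.** Every configuration reachable from `(1̄, 2, 3, 4)` by the
cut `α` and the flip `β = δ₂` has exactly one maloriented card, and if `q` is the unique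
position whose orientation differs from the other three and `r` is the position of the
card originally third from the top, then `q ≡ r + 2 (mod 4)`. -/
theorem baby_hummer_tracking (c : Deck 4)
    (hreach : Reachable ({cut, flipTop 2} : Set (Deck 4 → Deck 4)) babyHummerStart c) :
    ((Finset.univ.filter fun p : Fin 4 => (c p).2 = true).card = 1 ∨
      (Finset.univ.filter fun p : Fin 4 => (c p).2 = true).card = 3) ∧
    ∀ q r : Fin 4, (∀ p : Fin 4, p ≠ q → (c p).2 ≠ (c q).2) → (c r).1 = 2 →
      q = r + 2 := by
  obtain ⟨q₀, hq₀, hr₀⟩ : HummerInvariant c := by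
    refine hreach.invariant ?_ hummerInvariant_babyHummerStart
    rintro f (rfl | rfl) c hc
    exacts [hc.cut, hc.flipTop_two]
  refine ⟨hq₀.card_faceUp, fun q r hq hr => ?_⟩
  rw [← hq₀.eq (by norm_num) hq]
  exact hr₀ r hr
end

section
/- (Odd Hummer Principle with extra cut-like moves) Let n be odd. For every configuration c of an n-card deck reachable from the all-face-down initial configuration c₀ by finitely many applications of flips δ_k with k even, deals γ_j with j even, and moves ω_l with l odd, every face-up card sits at a position whose parity differs from that of its original position: for every position p with (c p).2 = true, p.val % 2 ≠ ((c p).1).val % 2. -/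
/-!
The invariant proved is stronger: a card is face up exactly when the parity of its position
differs from that of its original position. Since `n` is odd, an even deal and a move `ω_l`
with `l` odd put every card at a position of the parity it had, without turning it; an even
flip `δ_k` sends position `p` to `k - 1 - p`, of the other parity, and turns the card over.
-/

def FaceUpIffParityChanged {n : ℕ} (c : Deck n) : Prop :=
  ∀ p : Fin n, (c p).2 = true ↔ p.val % 2 ≠ ((c p).1).val % 2

theorem Reachable.preserves {n : ℕ} {X : Set (Deck n → Deck n)} {P : Deck n → Prop}
    (hX : ∀ f ∈ X, ∀ c, P c → P (f c)) {c c' : Deck n} (h : Reachable X c c') (hc : P c) :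
    P c' := by
  induction h with
  | refl => exact hc
  | tail _ hstep ih =>
    obtain ⟨f, hf, rfl⟩ := hstep
    exact hX f hf _ ih

theorem faceUpIffParityChanged_initial {n : ℕ} : FaceUpIffParityChanged (initial : Deck n) := by
  simp [FaceUpIffParityChanged, initial]

namespace FaceUpIffParityChanged

variable {n : ℕ} {c : Deck n}

theorem apply_of_parity_eq (h : FaceUpIffParityChanged c) {p : ℕ} {q : Fin n}
    (hpq : p % 2 = q.val % 2) : (c q).2 = true ↔ p % 2 ≠ ((c q).1).val % 2 :=
  hpq ▸ h q

theorem not_apply_of_parity_ne (h : FaceUpIffParityChanged c) {p : ℕ} {q : Fin n}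
    (hpq : p % 2 ≠ q.val % 2) : (!(c q).2) = true ↔ p % 2 ≠ ((c q).1).val % 2 := by
  rw [Bool.not_eq_true', ← Bool.not_eq_true, h q]
  omega

theorem flipTop {k : ℕ} (hk : Even k) (h : FaceUpIffParityChanged c) :
    FaceUpIffParityChanged (flipTop k c) := by
  intro p
  obtain ⟨a, rfl⟩ := hk
  unfold _root_.flipTop
  split
  · exact h.not_apply_of_parity_ne (by simp only; omega)
  · exact h p

theorem deal (hn : Odd n) {j : ℕ} (hj : Even j) (h : FaceUpIffParityChanged c) :
    FaceUpIffParityChanged (deal j c) := by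
  intro p
  obtain ⟨m, rfl⟩ := hn
  obtain ⟨a, rfl⟩ := hj
  have := p.isLt
  unfold _root_.deal
  split <;> exact h.apply_of_parity_eq (by simp only; omega)

theorem omegaMove (hn : Odd n) {l : ℕ} (hl : Odd l) (h : FaceUpIffParityChanged c) :
    FaceUpIffParityChanged (omegaMove l c) := by
  intro p
  obtain ⟨m, rfl⟩ := hn
  obtain ⟨a, rfl⟩ := hl
  have := p.isLt
  unfold _root_.omegaMove
  split
  · split
    · exact h.apply_of_parity_eq (by simp only; omega)
    · split <;> exact h.apply_of_parity_eq (by simp only; omega)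
  · exact h p

end FaceUpIffParityChanged

/-- **Odd Hummer Principle with extra cut-like moves.** For a deck with an odd number `n`
of cards, all initially face down, after any number of even flips `δ_k`, even deals `γ_j`
and moves `ω_l` with `l` odd and `0 < l < n`, every face-up card sits at a position whose
parity differs from that of its original position. -/
theorem odd_hummer_with_omega (n : ℕ) (hn : Odd n) (c : Deck n)
    (hreach : Reachable
      (({f | ∃ k, Even k ∧ 0 < k ∧ k ≤ n ∧ f = flipTop k} ∪
        {f | ∃ j, Even j ∧ 0 < j ∧ j ≤ n ∧ f = deal j} ∪
        {f | ∃ l, Odd l ∧ 0 < l ∧ l < n ∧ f = omegaMove l} :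
        Set (Deck n → Deck n))) initial c) :
    ∀ p : Fin n, (c p).2 = true → p.val % 2 ≠ ((c p).1).val % 2 := by
  have hinv : FaceUpIffParityChanged c := by
    refine hreach.preserves ?_ faceUpIffParityChanged_initial
    rintro f ((⟨k, hk, -, -, rfl⟩ | ⟨j, hj, -, -, rfl⟩) | ⟨l, hl, -, -, rfl⟩) c hc
    exacts [hc.flipTop hk, hc.deal hn hj, hc.omegaMove hn hl]
  exact fun p => (hinv p).1
end
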